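/- arXiv:1102.5541 — 3 statements merged into one kernel-verified Lean document; each statement's English description precedes it below -/
import Mathlib

section
/- Let t > 0, r > 0 and let f : ℝ → ℝ be Borel measurable with 0 ≤ f(s) ≤ r for all s ∈ [0,t]. Let p denote the two-dimensional Lebesgue measure of the acceptance region A = {(s,u) : s ∈ [0,t], u ∈ [0,1], f(s)/r < u}. Then ∑_{k=0}^∞ e^{−rt} (rt)^k / k! · (p/t)^k = exp(−∫₀ᵗ f(s) ds). (This is the acceptance probability identity P(N = 0 | X) = exp{−∫₀ᵗ φ(X_s) ds} underlying the exact algorithm: conditioning on a Poisson(rt) number of points, each independently landing in the acceptance region with probability p/t.) -/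
/-!
Slicing the acceptance region at abscissa `s ∈ [0,t]` leaves the interval `(f(s)/r, 1]`, so
`p = t - (∫₀ᵗ f) / r`. The series is `exp(-rt)` times the exponential series at `rt · p/t`,
and `rt - rt · p/t = ∫₀ᵗ f`.
-/

open Set MeasureTheory

section RegionBetween

variable {α : Type*} [MeasurableSpace α] {μ : Measure α} {f g : α → ℝ} {s : Set α}

theorem volume_region_between_oc_eq_lintegral (hf : Measurable f) (hg : Measurable g)
    (hs : MeasurableSet s) :
    μ.prod volume {p : α × ℝ | p.1 ∈ s ∧ p.2 ∈ Ioc (f p.1) (g p.1)} =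
      ∫⁻ x in s, ENNReal.ofReal (g x - f x) ∂μ := by
  rw [Measure.prod_apply (measurableSet_region_between_oc hf hg hs),
    ← lintegral_indicator hs]
  congr 1 with x
  by_cases hx : x ∈ s
  · simp only [preimage, mem_ofPred_eq, hx, true_and, indicator_of_mem]
    exact Real.volume_Ioc
  · simp [hx]

theorem measureReal_prod_above_graph_of_le_one (hg : Measurable g) (hs : MeasurableSet s)
    (hμs : μ s ≠ ⊤) (hg0 : ∀ x ∈ s, 0 ≤ g x) (hg1 : ∀ x ∈ s, g x ≤ 1) :
    (μ.prod volume {q : α × ℝ | q.1 ∈ s ∧ q.2 ∈ Icc 0 1 ∧ g q.1 < q.2}).toReal =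
      μ.real s - ∫ x in s, g x ∂μ := by
  have hregion : {q : α × ℝ | q.1 ∈ s ∧ q.2 ∈ Icc 0 1 ∧ g q.1 < q.2} =
      {q : α × ℝ | q.1 ∈ s ∧ q.2 ∈ Ioc (g q.1) 1} := by
    ext ⟨x, u⟩
    simp only [mem_ofPred_eq, mem_Icc, mem_Ioc]
    constructor
    · rintro ⟨hx, ⟨-, hu1⟩, hgu⟩
      exact ⟨hx, hgu, hu1⟩
    · rintro ⟨hx, hgu, hu1⟩
      exact ⟨hx, ⟨(hg0 x hx).trans hgu.le, hu1⟩, hgu⟩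
  have hg_int : IntegrableOn g s μ :=
    Measure.integrableOn_of_bounded (M := 1) hμs hg.aestronglyMeasurable
      (ae_restrict_of_forall_mem hs fun x hx => by
        rw [Real.norm_of_nonneg (hg0 x hx)]; exact hg1 x hx)
  have hone_int : IntegrableOn (fun _ => (1 : ℝ)) s μ := integrableOn_const hμs
  have hgap_int : IntegrableOn (fun x => 1 - g x) s μ := hone_int.sub hg_int
  have hgap_nonneg : 0 ≤ᵐ[μ.restrict s] fun x => 1 - g x :=
    ae_restrict_of_forall_mem hs fun x hx => sub_nonneg.2 (hg1 x hx)
  rw [hregion, volume_region_between_oc_eq_lintegral hg measurable_const hs,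
    ← ofReal_integral_eq_lintegral_ofReal hgap_int hgap_nonneg,
    ENNReal.toReal_ofReal (integral_nonneg_of_ae hgap_nonneg),
    integral_sub hone_int hg_int, setIntegral_const, smul_eq_mul, mul_one]

end RegionBetween

theorem tsum_poisson_mul_pow (a q : ℝ) :
    ∑' k : ℕ, Real.exp (-a) * a ^ k / k.factorial * q ^ k = Real.exp (-(a * (1 - q))) := by
  have hterm (k : ℕ) :
      Real.exp (-a) * a ^ k / k.factorial * q ^ k = Real.exp (-a) * ((a * q) ^ k / k.factorial) := by
    rw [mul_pow]; ring
  rw [tsum_congr hterm, tsum_mul_left, ← congrFun NormedSpace.exp_eq_tsum_div, ← Real.exp_eq_exp_ℝ,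
    ← Real.exp_add]
  ring_nf

/-- Acceptance probability identity underlying the exact algorithm: with a
Poisson(rt) number of points, each independently landing in the acceptance
region `A = {(s,u) : s ∈ [0,t], u ∈ [0,1], f(s)/r < u}` with probability `p/t`
(where `p` is the Lebesgue measure of `A`), the probability that all points
land in `A` is `exp(-∫₀ᵗ f(s) ds)`. -/
theorem acceptance_probability (t r : ℝ) (ht : 0 < t) (hr : 0 < r)
    (f : ℝ → ℝ) (hf : Measurable f)
    (hf0 : ∀ s ∈ Icc (0 : ℝ) t, 0 ≤ f s) (hfr : ∀ s ∈ Icc (0 : ℝ) t, f s ≤ r)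
    (p : ℝ)
    (hp : p = (volume {q : ℝ × ℝ |
      q.1 ∈ Icc (0 : ℝ) t ∧ q.2 ∈ Icc (0 : ℝ) 1 ∧ f q.1 / r < q.2}).toReal) :
    ∑' k : ℕ, Real.exp (-(r * t)) * (r * t) ^ k / (Nat.factorial k) * (p / t) ^ k =
      Real.exp (-(∫ s in (0 : ℝ)..t, f s)) := by
  have hp_eq : p = t - (∫ s in (0 : ℝ)..t, f s) / r := by
    rw [hp, Measure.volume_eq_prod,
      measureReal_prod_above_graph_of_le_one (hf.div_const r) measurableSet_Icc (by simp)
        (fun s hs => div_nonneg (hf0 s hs) hr.le) (fun s hs => div_le_one_of_le₀ (hfr s hs) hr.le),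
      Real.volume_real_Icc_of_le ht.le, integral_div, intervalIntegral.integral_of_le ht.le,
      integral_Icc_eq_integral_Ioc, sub_zero]
  rw [tsum_poisson_mul_pow, hp_eq]
  congr 1
  field_simp
  ring
end

section
/- Let ρ > 0, σ > 0 and μ ≥ 0. Define a : ℝ → ℝ by a(x) = −(ρ/σ + σ/2)·tanh(σx) + ρμ/(σ·cosh(σx)) and let a′ denote its derivative. Then for all x ∈ ℝ, ½(a(x)² + a′(x)) ≥ −½(ρ + σ²/2 + ρμ/2); i.e., l(θ) = −½(ρ + σ²/2 + ρμ/2) is a lower bound for the function ½(a² + a′) associated with the Lamperti-transformed Pearson diffusion. -/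
/-! Writing `c = cosh (σx)` and `s = sinh (σx)`, the drift has derivative
`a′ = -(ρ + σ²/2 + ρμ s) / c²`. Since `c² = 1 + s² ≥ max 1 (2s)`, this gives
`a′ ≥ -(ρ + σ²/2) - ρμ/2`, and dropping `a² ≥ 0` yields the bound. -/

open Real

theorem Real.hasDerivAt_tanh (x : ℝ) : HasDerivAt tanh (1 / cosh x ^ 2) x := by
  have h := (hasDerivAt_sinh x).div (hasDerivAt_cosh x) (cosh_pos x).ne'
  rw [show tanh = sinh / cosh from funext tanh_eq_sinh_div_cosh]
  refine h.congr_deriv ?_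
  rw [← cosh_sq_sub_sinh_sq x]
  ring

theorem Real.inv_cosh_sq_le_one (x : ℝ) : (cosh x ^ 2)⁻¹ ≤ 1 :=
  inv_le_one_of_one_le₀ (one_le_pow₀ (one_le_cosh x))

theorem Real.sinh_div_cosh_sq_le_half (x : ℝ) : sinh x / cosh x ^ 2 ≤ 1 / 2 := by
  rw [div_le_iff₀ (by positivity), cosh_sq']
  nlinarith [sq_nonneg (sinh x - 1)]

noncomputable def pearsonLampertiDrift (ρ σ μ x : ℝ) : ℝ :=
  -(ρ / σ + σ / 2) * tanh (σ * x) + ρ * μ / (σ * cosh (σ * x))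

section PearsonLampertiDrift

variable {ρ σ μ : ℝ}

theorem hasDerivAt_pearsonLampertiDrift (hσ : σ ≠ 0) (x : ℝ) :
    HasDerivAt (pearsonLampertiDrift ρ σ μ)
      (-(ρ + σ ^ 2 / 2 + ρ * μ * sinh (σ * x)) / cosh (σ * x) ^ 2) x := by
  have hlin : HasDerivAt (fun u => σ * u) σ x := by
    simpa using (hasDerivAt_id x).const_mul σ
  have htanh := (hasDerivAt_tanh (σ * x)).comp x hlin
  have hsech := ((hasDerivAt_cosh (σ * x)).comp x hlin).inv (cosh_pos _).ne'
  have hcosh := (cosh_pos (σ * x)).ne'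
  have hdrift : pearsonLampertiDrift ρ σ μ =
      fun u => -(ρ / σ + σ / 2) * tanh (σ * u) + ρ * μ / σ * (cosh (σ * u))⁻¹ := by
    funext u
    simp only [pearsonLampertiDrift]
    ring
  rw [hdrift]
  refine ((htanh.const_mul _).add (hsech.const_mul _)).congr_deriv ?_
  simp only [Function.comp_apply]
  field_simp
  ring

theorem neg_le_deriv_pearsonLampertiDrift (hρ : 0 ≤ ρ) (hμ : 0 ≤ μ) (hσ : σ ≠ 0) (x : ℝ) :
    -(ρ + σ ^ 2 / 2 + ρ * μ / 2) ≤ deriv (pearsonLampertiDrift ρ σ μ) x := by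
  have hρμ : 0 ≤ ρ * μ := mul_nonneg hρ hμ
  have hdrift : 0 ≤ ρ + σ ^ 2 / 2 := by positivity
  calc -(ρ + σ ^ 2 / 2 + ρ * μ / 2)
      ≤ -(ρ + σ ^ 2 / 2) * (cosh (σ * x) ^ 2)⁻¹ - ρ * μ * (sinh (σ * x) / cosh (σ * x) ^ 2) := by
        nlinarith [mul_le_mul_of_nonneg_left (inv_cosh_sq_le_one (σ * x)) hdrift,
          mul_le_mul_of_nonneg_left (sinh_div_cosh_sq_le_half (σ * x)) hρμ]
    _ = deriv (pearsonLampertiDrift ρ σ μ) x := by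
        rw [(hasDerivAt_pearsonLampertiDrift hσ x).deriv]
        ring

end PearsonLampertiDrift

/-- For the Lamperti-transformed Pearson diffusion with drift
`a(x) = -(ρ/σ + σ/2)·tanh(σx) + ρμ/(σ·cosh(σx))`, the quantity
`l(θ) = -½(ρ + σ²/2 + ρμ/2)` is a lower bound for `½(a² + a′)`. -/
theorem pearson_phi_lower_bound (ρ σ μ : ℝ) (hρ : 0 < ρ) (hσ : 0 < σ) (hμ : 0 ≤ μ) :
    ∀ x : ℝ,
      (1 / 2) *
          ((fun u => -(ρ / σ + σ / 2) * Real.tanh (σ * u) +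
              ρ * μ / (σ * Real.cosh (σ * u))) x ^ 2 +
            deriv (fun u => -(ρ / σ + σ / 2) * Real.tanh (σ * u) +
              ρ * μ / (σ * Real.cosh (σ * u))) x) ≥
        -(1 / 2) * (ρ + σ ^ 2 / 2 + ρ * μ / 2) := by
  intro x
  change 1 / 2 * (pearsonLampertiDrift ρ σ μ x ^ 2 + deriv (pearsonLampertiDrift ρ σ μ) x) ≥ _
  nlinarith [neg_le_deriv_pearsonLampertiDrift hρ.le hμ hσ.ne' x,
    sq_nonneg (pearsonLampertiDrift ρ σ μ x)]
end

section
/- Let ρ₁, ρ₂, μ₁, μ₂, σ > 0. Define, for x₁, x₂ ∈ ℝ, H₁(x₁,x₂) = ρ₂μ₂σ²(x₂ − μ₂x₁), H₂(x₁,x₂) = −2ρ₁σ²x₂(σ²x₂² − μ₁) − ρ₂σ²(x₂ − μ₂x₁), and ΔH(x₁,x₂) = −ρ₂μ₂²σ² − 2ρ₁σ²(3σ²x₂² − μ₁) − ρ₂σ². Set p₁ = 2μ₂σ²√(2ρ₁)·(9 + μ₂²(9 + 2ρ₁μ₁²))^{3/2} and p₂ = μ₂²σ²·(54ρ₁μ₁(1+μ₂²)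 − 8ρ₁²μ₁³μ₂² + 27ρ₂(1+μ₂²)²). Then for all x₁, x₂ ∈ ℝ, ½(H₁(x₁,x₂)² + H₂(x₁,x₂)²) + ½ΔH(x₁,x₂) ≥ −(p₁ + p₂)/(54μ₂²(1+μ₂²)), and this lower bound is attained at some point; i.e., l(θ) = −(p₁+p₂)/(54μ₂²(1+μ₂²)) is the global minimum of ψ(x) = ½(‖∇H(x)‖² + ΔH(x)). -/
/-!
Write `t = ρ₂σ²(x₂ - μ₂x₁)`, so that `H₁ = μ₂ t` and `H₂ = f(x₂) - t`. As `x₁` varies, `t`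
sweeps out `ℝ`, and completing the square in `t` leaves a cubic
`p(u) = k u (u - μ₁)² - c u + d` in `u = σ²x₂² ≥ 0`. At its larger critical point `u₀ ≥ μ₁`,
`p(u) - p(u₀) = k (u - u₀)² (u + 2u₀ - 2μ₁) ≥ 0` on `[0, ∞)`, and `p(u₀)` is `l(θ)`: the
constant `p₁` is the `s³` term, where `u₀ = (2μ₁ + s)/3` and `s² = μ₁² + 9(1 + μ₂²)/(2ρ₁μ₂²)`.
-/
open Set

theorem Real.rpow_three_halves {x : ℝ} (hx : 0 ≤ x) : x ^ (3 / 2 : ℝ) = x * √x := by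
  rw [show (3 / 2 : ℝ) = 1 + 1 / 2 by norm_num, Real.rpow_add' hx (by norm_num), Real.rpow_one,
    Real.sqrt_eq_rpow]

section Cubic

variable {k m c : ℝ}

/-- The larger critical point of `u ↦ k u (u - m)² - c u`. -/
noncomputable def cubicArgmin (k m c : ℝ) : ℝ := (2 * m + √(m ^ 2 + 3 * c / k)) / 3

theorem mul_sq_sqrt_cubicArgmin (hk : 0 < k) (hc : 0 ≤ c) :
    k * √(m ^ 2 + 3 * c / k) ^ 2 = k * m ^ 2 + 3 * c := by
  rw [Real.sq_sqrt (by positivity)]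
  field_simp

theorem le_cubicArgmin (hk : 0 < k) (hc : 0 ≤ c) : m ≤ cubicArgmin k m c := by
  have : m ≤ √(m ^ 2 + 3 * c / k) :=
    Real.le_sqrt_of_sq_le (le_add_of_nonneg_right (by positivity))
  unfold cubicArgmin
  linarith

theorem cubicArgmin_nonneg (hm : 0 ≤ m) : 0 ≤ cubicArgmin k m c := by
  unfold cubicArgmin
  positivity

theorem isMinOn_cubicArgmin (hk : 0 < k) (hc : 0 ≤ c) (d : ℝ) :
    IsMinOn (fun u => k * u * (u - m) ^ 2 - c * u + d) (Ici 0) (cubicArgmin k m c) := by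
  set u₀ := cubicArgmin k m c
  have hcrit : k * (u₀ - m) * (3 * u₀ - m) = c := by
    have := mul_sq_sqrt_cubicArgmin (m := m) hk hc
    simp only [u₀, cubicArgmin]
    linear_combination this / 3
  intro u (hu : 0 ≤ u)
  have hfactor : (k * u * (u - m) ^ 2 - c * u + d) - (k * u₀ * (u₀ - m) ^ 2 - c * u₀ + d) =
      k * (u - u₀) ^ 2 * (u + 2 * u₀ - 2 * m) := by
    linear_combination (u - u₀) * hcrit
  have hthird : 0 ≤ u + 2 * u₀ - 2 * m := by linarith [le_cubicArgmin (m := m) hk hc]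
  have : 0 ≤ k * (u - u₀) ^ 2 * (u + 2 * u₀ - 2 * m) := by positivity
  show k * u₀ * (u₀ - m) ^ 2 - c * u₀ + d ≤ k * u * (u - m) ^ 2 - c * u + d
  linarith

theorem cubic_cubicArgmin (hk : 0 < k) (hc : 0 ≤ c) :
    k * cubicArgmin k m c * (cubicArgmin k m c - m) ^ 2 - c * cubicArgmin k m c =
      2 * k * (m ^ 3 - √(m ^ 2 + 3 * c / k) ^ 3) / 27 - 2 * c * m / 3 := by
  have := mul_sq_sqrt_cubicArgmin (m := m) hk hc
  simp only [cubicArgmin]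
  linear_combination (√(m ^ 2 + 3 * c / k) / 9) * this

end Cubic

noncomputable section

namespace DoubleWell

variable (ρ₁ ρ₂ μ₁ μ₂ σ : ℝ)

def H₁ (x₁ x₂ : ℝ) : ℝ := ρ₂ * μ₂ * σ ^ 2 * (x₂ - μ₂ * x₁)

def H₂ (x₁ x₂ : ℝ) : ℝ :=
  -2 * ρ₁ * σ ^ 2 * x₂ * (σ ^ 2 * x₂ ^ 2 - μ₁) - ρ₂ * σ ^ 2 * (x₂ - μ₂ * x₁)

def laplacianH (x₂ : ℝ) : ℝ :=
  -(ρ₂ * μ₂ ^ 2 * σ ^ 2) - 2 * ρ₁ * σ ^ 2 * (3 * σ ^ 2 * x₂ ^ 2 - μ₁) - ρ₂ * σ ^ 2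

def psi (x₁ x₂ : ℝ) : ℝ :=
  (1 / 2) * (H₁ ρ₂ μ₂ σ x₁ x₂ ^ 2 + H₂ ρ₁ ρ₂ μ₁ μ₂ σ x₁ x₂ ^ 2) + (1 / 2) * laplacianH ρ₁ ρ₂ μ₁ μ₂ σ x₂

def profileCoeff : ℝ := 2 * ρ₁ ^ 2 * σ ^ 2 * μ₂ ^ 2 / (1 + μ₂ ^ 2)

/-- `min_{x₁} ψ(x₁, x₂)` as a function of `u = σ²x₂²`. -/
def profile (u : ℝ) : ℝ :=
  profileCoeff ρ₁ μ₂ σ * u * (u - μ₁) ^ 2 - 3 * ρ₁ * σ ^ 2 * u +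
    (ρ₁ * σ ^ 2 * μ₁ - ρ₂ * σ ^ 2 * (1 + μ₂ ^ 2) / 2)

def optimalX₁ (x₂ : ℝ) : ℝ :=
  (x₂ + 2 * ρ₁ * x₂ * (σ ^ 2 * x₂ ^ 2 - μ₁) / (ρ₂ * (1 + μ₂ ^ 2))) / μ₂

def lowerBound : ℝ :=
  -((2 * μ₂ * σ ^ 2 * Real.sqrt (2 * ρ₁) *
        (9 + μ₂ ^ 2 * (9 + 2 * ρ₁ * μ₁ ^ 2)) ^ ((3 : ℝ) / 2) +
      μ₂ ^ 2 * σ ^ 2 * (54 * ρ₁ * μ₁ * (1 + μ₂ ^ 2) -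
        8 * ρ₁ ^ 2 * μ₁ ^ 3 * μ₂ ^ 2 + 27 * ρ₂ * (1 + μ₂ ^ 2) ^ 2)) /
    (54 * μ₂ ^ 2 * (1 + μ₂ ^ 2)))

theorem psi_eq (x₁ x₂ : ℝ) :
    psi ρ₁ ρ₂ μ₁ μ₂ σ x₁ x₂ =
      (1 + μ₂ ^ 2) / 2 * (ρ₂ * σ ^ 2 * (x₂ - μ₂ * x₁) +
        2 * ρ₁ * σ ^ 2 * x₂ * (σ ^ 2 * x₂ ^ 2 - μ₁) / (1 + μ₂ ^ 2)) ^ 2 +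
      profile ρ₁ ρ₂ μ₁ μ₂ σ (σ ^ 2 * x₂ ^ 2) := by
  simp only [psi, H₁, H₂, laplacianH, profile, profileCoeff]
  field_simp
  ring

theorem profile_le_psi (x₁ x₂ : ℝ) :
    profile ρ₁ ρ₂ μ₁ μ₂ σ (σ ^ 2 * x₂ ^ 2) ≤ psi ρ₁ ρ₂ μ₁ μ₂ σ x₁ x₂ := by
  rw [psi_eq]
  exact le_add_of_nonneg_left (by positivity)

theorem psi_optimalX₁ (hρ₂ : ρ₂ ≠ 0) (hμ₂ : μ₂ ≠ 0) (x₂ : ℝ) :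
    psi ρ₁ ρ₂ μ₁ μ₂ σ (optimalX₁ ρ₁ ρ₂ μ₁ μ₂ σ x₂) x₂ = profile ρ₁ ρ₂ μ₁ μ₂ σ (σ ^ 2 * x₂ ^ 2) := by
  have : ρ₂ * σ ^ 2 * (x₂ - μ₂ * optimalX₁ ρ₁ ρ₂ μ₁ μ₂ σ x₂) +
      2 * ρ₁ * σ ^ 2 * x₂ * (σ ^ 2 * x₂ ^ 2 - μ₁) / (1 + μ₂ ^ 2) = 0 := by
    unfold optimalX₁
    field_simp
    ring
  rw [psi_eq, this]
  ring

def argmin : ℝ := cubicArgmin (profileCoeff ρ₁ μ₂ σ) μ₁ (3 * ρ₁ * σ ^ 2)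

theorem argmin_nonneg (hμ₁ : 0 ≤ μ₁) : 0 ≤ argmin ρ₁ μ₁ μ₂ σ :=
  cubicArgmin_nonneg hμ₁

theorem isMinOn_profile_argmin (hρ₁ : 0 < ρ₁) (hμ₂ : μ₂ ≠ 0) (hσ : σ ≠ 0) :
    IsMinOn (profile ρ₁ ρ₂ μ₁ μ₂ σ) (Ici 0) (argmin ρ₁ μ₁ μ₂ σ) :=
  isMinOn_cubicArgmin (by unfold profileCoeff; positivity) (by positivity) _

theorem profile_argmin (hρ₁ : 0 < ρ₁) (hμ₂ : 0 < μ₂) (hσ : σ ≠ 0) :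
    profile ρ₁ ρ₂ μ₁ μ₂ σ (argmin ρ₁ μ₁ μ₂ σ) = lowerBound ρ₁ ρ₂ μ₁ μ₂ σ := by
  have hk : 0 < profileCoeff ρ₁ μ₂ σ := by unfold profileCoeff; positivity
  have hc : 0 ≤ 3 * ρ₁ * σ ^ 2 := by positivity
  have hvalue := cubic_cubicArgmin (m := μ₁) hk hc
  have hs := mul_sq_sqrt_cubicArgmin (m := μ₁) hk hc
  set s := √(μ₁ ^ 2 + 3 * (3 * ρ₁ * σ ^ 2) / profileCoeff ρ₁ μ₂ σ)
  unfold profileCoeff at hs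
  field_simp at hs
  have hq : √(2 * ρ₁) ^ 2 = 2 * ρ₁ := Real.sq_sqrt (by positivity)
  have hX : 9 + μ₂ ^ 2 * (9 + 2 * ρ₁ * μ₁ ^ 2) = (√(2 * ρ₁) * μ₂ * s) ^ 2 := by
    linear_combination -hs - μ₂ ^ 2 * s ^ 2 * hq
  have hp₁ : 2 * μ₂ * σ ^ 2 * √(2 * ρ₁) * (9 + μ₂ ^ 2 * (9 + 2 * ρ₁ * μ₁ ^ 2)) ^ ((3 : ℝ) / 2) =
      8 * ρ₁ ^ 2 * μ₂ ^ 4 * σ ^ 2 * s ^ 3 := by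
    rw [Real.rpow_three_halves (by positivity), hX, Real.sqrt_sq (by positivity)]
    linear_combination (2 * μ₂ ^ 4 * σ ^ 2 * s ^ 3 * (√(2 * ρ₁) ^ 2 + 2 * ρ₁)) * hq
  simp only [profile, lowerBound, argmin]
  rw [hp₁, hvalue]
  unfold profileCoeff
  field_simp
  ring

end DoubleWell

end

open DoubleWell

/-- For the two-dimensional double well potential diffusion, the function
`ψ(x) = ½(‖∇H(x)‖² + ΔH(x))`, where `H₁, H₂` are the partial derivatives and
`ΔH` the Laplacian of the potential `H(x) = -½G(σx)`, attains the global
minimum `l(θ) = -(p₁ + p₂)/(54 μ₂²(1 + μ₂²))`. -/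
theorem mvwell_psi_global_min (ρ₁ ρ₂ μ₁ μ₂ σ : ℝ)
    (hρ₁ : 0 < ρ₁) (hρ₂ : 0 < ρ₂) (hμ₁ : 0 < μ₁) (hμ₂ : 0 < μ₂) (hσ : 0 < σ) :
    (∀ x₁ x₂ : ℝ,
        (1 / 2) * ((ρ₂ * μ₂ * σ ^ 2 * (x₂ - μ₂ * x₁)) ^ 2 +
              (-2 * ρ₁ * σ ^ 2 * x₂ * (σ ^ 2 * x₂ ^ 2 - μ₁) -
                  ρ₂ * σ ^ 2 * (x₂ - μ₂ * x₁)) ^ 2) +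
            (1 / 2) * (-(ρ₂ * μ₂ ^ 2 * σ ^ 2) -
              2 * ρ₁ * σ ^ 2 * (3 * σ ^ 2 * x₂ ^ 2 - μ₁) - ρ₂ * σ ^ 2) ≥
          -((2 * μ₂ * σ ^ 2 * Real.sqrt (2 * ρ₁) *
                (9 + μ₂ ^ 2 * (9 + 2 * ρ₁ * μ₁ ^ 2)) ^ ((3 : ℝ) / 2) +
              μ₂ ^ 2 * σ ^ 2 * (54 * ρ₁ * μ₁ * (1 + μ₂ ^ 2) -
                8 * ρ₁ ^ 2 * μ₁ ^ 3 * μ₂ ^ 2 + 27 * ρ₂ * (1 + μ₂ ^ 2) ^ 2)) /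
            (54 * μ₂ ^ 2 * (1 + μ₂ ^ 2)))) ∧
      ∃ x₁ x₂ : ℝ,
        (1 / 2) * ((ρ₂ * μ₂ * σ ^ 2 * (x₂ - μ₂ * x₁)) ^ 2 +
              (-2 * ρ₁ * σ ^ 2 * x₂ * (σ ^ 2 * x₂ ^ 2 - μ₁) -
                  ρ₂ * σ ^ 2 * (x₂ - μ₂ * x₁)) ^ 2) +
            (1 / 2) * (-(ρ₂ * μ₂ ^ 2 * σ ^ 2) -
              2 * ρ₁ * σ ^ 2 * (3 * σ ^ 2 * x₂ ^ 2 - μ₁) - ρ₂ * σ ^ 2) =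
          -((2 * μ₂ * σ ^ 2 * Real.sqrt (2 * ρ₁) *
                (9 + μ₂ ^ 2 * (9 + 2 * ρ₁ * μ₁ ^ 2)) ^ ((3 : ℝ) / 2) +
              μ₂ ^ 2 * σ ^ 2 * (54 * ρ₁ * μ₁ * (1 + μ₂ ^ 2) -
                8 * ρ₁ ^ 2 * μ₁ ^ 3 * μ₂ ^ 2 + 27 * ρ₂ * (1 + μ₂ ^ 2) ^ 2)) /
            (54 * μ₂ ^ 2 * (1 + μ₂ ^ 2))) := by
  have hmin := isMinOn_profile_argmin ρ₁ ρ₂ μ₁ μ₂ σ hρ₁ hμ₂.ne' hσ.ne'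
  have hvalue := profile_argmin ρ₁ ρ₂ μ₁ μ₂ σ hρ₁ hμ₂ hσ.ne'
  refine ⟨fun x₁ x₂ => ?_, ?_⟩
  · show lowerBound ρ₁ ρ₂ μ₁ μ₂ σ ≤ psi ρ₁ ρ₂ μ₁ μ₂ σ x₁ x₂
    calc lowerBound ρ₁ ρ₂ μ₁ μ₂ σ = profile ρ₁ ρ₂ μ₁ μ₂ σ (argmin ρ₁ μ₁ μ₂ σ) := hvalue.symm
      _ ≤ profile ρ₁ ρ₂ μ₁ μ₂ σ (σ ^ 2 * x₂ ^ 2) := hmin (by positivity : 0 ≤ σ ^ 2 * x₂ ^ 2)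
      _ ≤ psi ρ₁ ρ₂ μ₁ μ₂ σ x₁ x₂ := profile_le_psi ..
  · obtain ⟨x₂, hx₂⟩ : ∃ x₂, σ ^ 2 * x₂ ^ 2 = argmin ρ₁ μ₁ μ₂ σ := by
      refine ⟨√(argmin ρ₁ μ₁ μ₂ σ) / σ, ?_⟩
      rw [div_pow, Real.sq_sqrt (argmin_nonneg _ _ _ _ hμ₁.le)]
      field_simp
    refine ⟨optimalX₁ ρ₁ ρ₂ μ₁ μ₂ σ x₂, x₂, ?_⟩
    show psi ρ₁ ρ₂ μ₁ μ₂ σ _ x₂ = lowerBound ρ₁ ρ₂ μ₁ μ₂ σ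
    rw [psi_optimalX₁ _ _ _ _ _ hρ₂.ne' hμ₂.ne', hx₂, hvalue]
end
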